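/- arXiv:2412.17320 — 3 statements merged into one kernel-verified Lean document; each statement's English description precedes it below -/
import Mathlib

section
/- Let J ⊆ I be homogeneous ideals in a polynomial ring K[x₁,…,x_N] over a field, and let f be a non-constant homogeneous polynomial such that I ∩ ⟨f⟩ = f·I and I + ⟨f⟩ = J + ⟨f⟩. Then I = J. -/
open MvPolynomial

/-- An ideal of a polynomial ring is homogeneous if it is generated by a set of
homogeneous elements. -/
def IsHomogeneousIdeal {K : Type*} [Field K] {N : ℕ}
    (I : Ideal (MvPolynomial (Fin N) K)) : Prop :=
  ∃ S : Set (MvPolynomial (Fin N) K),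
    (∀ g ∈ S, ∃ d : ℕ, g.IsHomogeneous d) ∧ I = Ideal.span S

attribute [local instance] MvPolynomial.gradedAlgebra

section Aux

variable {K : Type*} [Field K] {N : ℕ}

lemma decompose_eq_homogeneousComponent (r : MvPolynomial (Fin N) K) (i : ℕ) :
    (DirectSum.decompose (homogeneousSubmodule (Fin N) K) r i : MvPolynomial (Fin N) K)
      = homogeneousComponent i r :=
  MvPolynomial.decomposition.decompose'_apply r i

lemma homIdeal_isHomogeneous {I : Ideal (MvPolynomial (Fin N) K)}
    (hI : IsHomogeneousIdeal I) :
    I.IsHomogeneous (homogeneousSubmodule (Fin N) K) := by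
  obtain ⟨S, hS, rfl⟩ := hI
  exact Ideal.homogeneous_span _ S fun x hx => by
    obtain ⟨d, hd⟩ := hS x hx
    exact ⟨d, (mem_homogeneousSubmodule _ _).2 hd⟩

lemma homogeneousComponent_mem_of_isHomogeneous {I : Ideal (MvPolynomial (Fin N) K)}
    (hI : I.IsHomogeneous (homogeneousSubmodule (Fin N) K))
    {r : MvPolynomial (Fin N) K} (hr : r ∈ I) (i : ℕ) :
    homogeneousComponent i r ∈ I := by
  have := hI i hr
  rwa [decompose_eq_homogeneousComponent] at this

end Aux

/-- If `J ⊆ I` are homogeneous ideals and `f` is a non-constant homogeneous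
polynomial with `I ∩ ⟨f⟩ = f·I` and `I + ⟨f⟩ = J + ⟨f⟩`, then `I = J`. -/
theorem eq_of_homogeneous_hyperplane {K : Type*} [Field K] {N : ℕ}
    (I J : Ideal (MvPolynomial (Fin N) K))
    (hI : IsHomogeneousIdeal I) (hJ : IsHomogeneousIdeal J) (hJI : J ≤ I)
    (f : MvPolynomial (Fin N) K) (d : ℕ) (hd : d ≠ 0)
    (hf : f.IsHomogeneous d) (hf0 : f ≠ 0)
    (h1 : I ⊓ Ideal.span {f} = Ideal.span {f} * I)
    (h2 : I ⊔ Ideal.span {f} = J ⊔ Ideal.span {f}) :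
    I = J := by
  have hI' := homIdeal_isHomogeneous hI
  have hJ' := homIdeal_isHomogeneous hJ
  have hfmem : f ∈ homogeneousSubmodule (Fin N) K d :=
    (mem_homogeneousSubmodule _ _).2 hf
  have key : ∀ e : ℕ, ∀ g : MvPolynomial (Fin N) K, g.IsHomogeneous e → g ∈ I → g ∈ J := by
    intro e
    induction e using Nat.strong_induction_on with
    | _ e IH =>
      intro g hg hgI
      have hgJf : g ∈ J ⊔ Ideal.span {f} := h2 ▸ Ideal.mem_sup_left hgI
      obtain ⟨j, hj, y, hy, hjy⟩ := Submodule.mem_sup.mp hgJf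
      set je := homogeneousComponent e j with hje_def
      set ye := homogeneousComponent e y with hye_def
      have hje : je ∈ J := homogeneousComponent_mem_of_isHomogeneous hJ' hj e
      have hsum : je + ye = g := by
        have h := congrArg (homogeneousComponent e) hjy
        rw [map_add, homogeneousComponent_of_mem
          ((mem_homogeneousSubmodule _ _).2 hg), if_pos rfl] at h
        exact h
      have hyeI : ye ∈ I := by
        have : ye = g - je := by rw [← hsum]; ring
        rw [this]
        exact I.sub_mem hgI (hJI hje)
      have hyehom : ye ∈ homogeneousSubmodule (Fin N) K e :=
        homogeneousComponent_isHomogeneous e y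
      have hfspan : (Ideal.span {f}).IsHomogeneous (homogeneousSubmodule (Fin N) K) :=
        Ideal.homogeneous_span _ _ (fun x hx => ⟨d, by
          rw [Set.mem_singleton_iff] at hx; rw [hx]; exact hfmem⟩)
      have hyeF : ye ∈ Ideal.span {f} :=
        homogeneousComponent_mem_of_isHomogeneous hfspan hy e
      have hyefI : ye ∈ Ideal.span {f} * I := by
        rw [← h1]; exact ⟨hyeI, hyeF⟩
      obtain ⟨z, hzI, hz⟩ := Ideal.mem_span_singleton_mul.mp hyefI
      rcases le_or_gt d e with hde | hde
      · set zn := homogeneousComponent (e - d) z with hzn_def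
        have hznI : zn ∈ I := homogeneousComponent_mem_of_isHomogeneous hI' hzI _
        have hznhom : zn.IsHomogeneous (e - d) := homogeneousComponent_isHomogeneous _ _
        have hznJ : zn ∈ J := IH (e - d) (by omega) zn hznhom hznI
        have hye_eq : ye = f * zn := by
          have h1' := DirectSum.coe_decompose_mul_of_left_mem_of_le
            (𝒜 := homogeneousSubmodule (Fin N) K) (b := z) hfmem hde
          rw [decompose_eq_homogeneousComponent, decompose_eq_homogeneousComponent] at h1'
          rw [hz, homogeneousComponent_of_mem hyehom, if_pos rfl] at h1'
          rw [← hzn_def] at h1'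
          exact h1'.symm ▸ rfl
        rw [← hsum]
        exact J.add_mem hje (hye_eq ▸ J.mul_mem_left f hznJ)
      · have hye0 : ye = 0 := by
          have h1' := DirectSum.coe_decompose_mul_of_left_mem_of_not_le
            (𝒜 := homogeneousSubmodule (Fin N) K) (b := z) hfmem (not_le.mpr hde)
          rw [decompose_eq_homogeneousComponent, hz,
            homogeneousComponent_of_mem hyehom, if_pos rfl] at h1'
          exact h1'
        rw [← hsum, hye0, add_zero]
        exact hje
  classical
  refine le_antisymm ?_ hJI
  intro g hgI
  rw [← DirectSum.sum_support_decompose (homogeneousSubmodule (Fin N) K) g]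
  apply Ideal.sum_mem
  intro i _
  refine key i _ ?_ (hI' i hgI)
  rw [decompose_eq_homogeneousComponent]
  exact homogeneousComponent_isHomogeneous i g
end

section
/- In K[x₁₁, x₁₂, x₂₁, x₂₂] with a term order in which x₁₂x₂₁ is the leading term of x₁₁x₂₂ − x₁₂x₂₁, the ideal sum ⟨x₁₁x₂₂ − x₁₂x₂₁⟩ + ⟨x₁₁⟩ equals the intersection ⟨x₁₁, x₁₂⟩ ∩ ⟨x₁₁, x₂₁⟩. -/
open MvPolynomial

private lemma det_transition_aux {K : Type*} [Field K] :
    Ideal.span {(X (0, 0) : MvPolynomial (Fin 2 × Fin 2) K), X (0,1) * X (1,0)}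
    = Ideal.span {(X (0, 0) : MvPolynomial (Fin 2 × Fin 2) K), X (0, 1)}
      ⊓ Ideal.span {(X (0, 0) : MvPolynomial (Fin 2 × Fin 2) K), X (1, 0)} := by
  have hX : ∀ i : Fin 2 × Fin 2, (X i : MvPolynomial (Fin 2 × Fin 2) K)
      = monomial (Finsupp.single i 1) 1 := fun i => rfl
  have hmul : (X (0,1) * X (1,0) : MvPolynomial (Fin 2 × Fin 2) K)
      = monomial (Finsupp.single (0,1) 1 + Finsupp.single (1,0) 1) 1 := by
    rw [hX, hX, monomial_mul, one_mul]
  have h1 : ({(X (0, 0) : MvPolynomial (Fin 2 × Fin 2) K), X (0,1) * X (1,0)} : Set _)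
      = (fun s => monomial s (1:K)) '' {Finsupp.single (0,0) 1,
          Finsupp.single (0,1) 1 + Finsupp.single (1,0) 1} := by
    rw [Set.image_insert_eq, Set.image_singleton, hX, hmul]
  have h2 : ({(X (0, 0) : MvPolynomial (Fin 2 × Fin 2) K), X (0,1)} : Set _)
      = (fun s => monomial s (1:K)) '' {Finsupp.single (0,0) 1, Finsupp.single (0,1) 1} := by
    rw [Set.image_insert_eq, Set.image_singleton, hX, hX]
  have h3 : ({(X (0, 0) : MvPolynomial (Fin 2 × Fin 2) K), X (1,0)} : Set _)
      = (fun s => monomial s (1:K)) '' {Finsupp.single (0,0) 1, Finsupp.single (1,0) 1} := by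
    rw [Set.image_insert_eq, Set.image_singleton, hX, hX]
  ext f
  rw [Ideal.mem_inf, h1, h2, h3, mem_ideal_span_monomial_image,
    mem_ideal_span_monomial_image, mem_ideal_span_monomial_image, ← forall_and]
  refine forall_congr' fun m => ?_
  rw [← imp_and]
  refine imp_congr_right fun hm => ?_
  simp only [Set.mem_insert_iff, Set.mem_singleton_iff, exists_eq_or_imp, exists_eq_left,
    Finsupp.single_le_iff, Finsupp.add_apply]
  constructor
  · rintro (h | h)
    · exact ⟨Or.inl h, Or.inl h⟩
    · have h1 := h
      rw [Finsupp.le_def] at h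
      have ha := h (0,1); have hb := h (1,0)
      simp [Finsupp.single_apply] at ha hb
      exact ⟨Or.inr ha, Or.inr hb⟩
  · rintro ⟨(h | ha), (h' | hb)⟩
    · exact Or.inl h
    · exact Or.inl h
    · exact Or.inl h'
    · refine Or.inr (Finsupp.le_def.mpr fun i => ?_)
      by_cases h01 : i = (0,1)
      · subst h01; simpa [Finsupp.single_apply] using ha
      · by_cases h10 : i = (1,0)
        · subst h10; simpa [Finsupp.single_apply] using hb
        · simp [Finsupp.single_apply, Ne.symm h01, Ne.symm h10]

/-- In `K[x₁₁, x₁₂, x₂₁, x₂₂]`, the transition recurrence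
`⟨x₁₁x₂₂ - x₁₂x₂₁⟩ + ⟨x₁₁⟩ = ⟨x₁₁, x₁₂⟩ ∩ ⟨x₁₁, x₂₁⟩` holds. -/
theorem det_transition {K : Type*} [Field K] :
    Ideal.span {(X (0, 0) * X (1, 1) - X (0, 1) * X (1, 0) :
        MvPolynomial (Fin 2 × Fin 2) K)}
      ⊔ Ideal.span {(X (0, 0) : MvPolynomial (Fin 2 × Fin 2) K)}
    = Ideal.span {(X (0, 0) : MvPolynomial (Fin 2 × Fin 2) K), X (0, 1)}
      ⊓ Ideal.span {(X (0, 0) : MvPolynomial (Fin 2 × Fin 2) K), X (1, 0)} := by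
  rw [← Ideal.span_union, Set.union_comm, Set.singleton_union, ← det_transition_aux]
  apply le_antisymm <;> rw [Ideal.span_le] <;> rintro p (rfl | rfl)
  · exact Ideal.subset_span (Or.inl rfl)
  · rw [SetLike.mem_coe, Ideal.mem_span_pair]
    exact ⟨X (1,1), -1, by ring⟩
  · exact Ideal.subset_span (Or.inl rfl)
  · rw [SetLike.mem_coe, Ideal.mem_span_pair]
    exact ⟨X (1,1), -1, by ring⟩
end

section
/- Let A and B be two sets of r+1 positive integers each with A = {a₀<…<a_r}, B = {b₀<…<b_r}, define A⊙B = {(aᵢ, b_{r−i}) : 0 ≤ i ≤ r} and A⊞B = {(i,j) ∈ A⊙B : i ≥ j} ∪ {(i,j) ∈ B⊙A : i ≥ j}. If the product ∏_{(i,j)∈A⊞B} u_{ij} (defined when every (i,j) ∈ A⊞B has i ≠ j) equals the single variable u_{ij} for some n ≥ i > j ≥ 1, then either A = B = {i,j} or {A,B} = {{i},{j}}. -/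
open MvPolynomial

/-
A product of distinct variables is the monomial of the indicator of the index set, so the hypothesis
forces `A⊞B = {(i, j)}`. For every `k`, one of the pairs `(aₖ, b_{r-k})`, `(b_{r-k}, aₖ)` has its
larger entry first and so lies in `A⊞B`; hence `{aₖ, b_{r-k}} = {i, j}`. Thus `A` and `B` are
`(r+1)`-element subsets of `{i, j}`, so `r ≤ 1`: for `r = 1` both equal `{i, j}`, and for `r = 0`
the single pair `(a₀, b₀)` is `(i, j)` or `(j, i)`.
-/

theorem MvPolynomial.eq_singleton_of_prod_X_eq_X {σ R : Type*} [CommSemiring R] [Nontrivial R]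
    {s : Finset σ} {q : σ} (h : ∏ p ∈ s, (X p : MvPolynomial σ R) = X q) : s = {q} := by
  have hexp : ∑ p ∈ s, Finsupp.single p 1 = Finsupp.single q 1 := by
    apply monomial_left_injective (one_ne_zero (α := R))
    simpa only [monomial_sum_one, X] using h
  apply Finset.val_injective
  simpa only [Finsupp.toMultiset_sum_single, Finsupp.toMultiset_single, one_nsmul,
    Finset.singleton_val] using congrArg Finsupp.toMultiset hexp

theorem Finset.eq_or_swap_eq_of_filter_le_eq_singleton {α : Type*} [LinearOrder α]
    {S : Finset (α × α)} {x y : α} {q : α × α} (hS : S.filter (fun p => p.2 ≤ p.1) = {q})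
    (hxy : (x, y) ∈ S) (hyx : (y, x) ∈ S) : (x, y) = q ∨ (y, x) = q := by
  rcases le_total y x with hle | hle
  · exact Or.inl (Finset.mem_singleton.mp (hS ▸ Finset.mem_filter.mpr ⟨hxy, hle⟩))
  · exact Or.inr (Finset.mem_singleton.mp (hS ▸ Finset.mem_filter.mpr ⟨hyx, hle⟩))

theorem Finset.image_univ_eq_of_subset_of_card_le {α β : Type*} [Fintype α] [DecidableEq β]
    {f : α → β} {t : Finset β} (hf : Function.Injective f) (hsub : Finset.univ.image f ⊆ t)
    (hcard : t.card ≤ Fintype.card α) : Finset.univ.image f = t :=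
  Finset.eq_of_subset_of_card_le hsub
    (by rwa [Finset.card_image_of_injective _ hf, Finset.card_univ])

theorem Fintype.card_le_of_image_univ_subset {α β : Type*} [Fintype α] [DecidableEq β]
    {f : α → β} {t : Finset β} (hf : Function.Injective f) (hsub : Finset.univ.image f ⊆ t) :
    Fintype.card α ≤ t.card := by
  simpa only [Finset.card_image_of_injective _ hf, Finset.card_univ] using Finset.card_le_card hsub

theorem uss_eq_single_variable_general {K : Type*} [Field K] {r : ℕ}
    (a b : Fin (r + 1) → ℕ) (ha : StrictMono a) (hb : StrictMono b)
    (i j : ℕ)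
    (AB : Finset (ℕ × ℕ))
    (hAB : AB =
      ((Finset.univ.image fun k : Fin (r + 1) => (a k, b k.rev)) ∪
        (Finset.univ.image fun k : Fin (r + 1) => (b k, a k.rev))).filter
        (fun p => p.2 ≤ p.1))
    (heq : (∏ p ∈ AB, (X p : MvPolynomial (ℕ × ℕ) K)) = X (i, j)) :
    (Finset.univ.image a = ({i, j} : Finset ℕ) ∧
        Finset.univ.image b = ({i, j} : Finset ℕ)) ∨
    (Finset.univ.image a = ({i} : Finset ℕ) ∧ Finset.univ.image b = ({j} : Finset ℕ)) ∨
    (Finset.univ.image a = ({j} : Finset ℕ) ∧ Finset.univ.image b = ({i} : Finset ℕ)) := by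
  obtain rfl := eq_singleton_of_prod_X_eq_X heq
  have hpair : ∀ k, (a k, b k.rev) = (i, j) ∨ (b k.rev, a k) = (i, j) := fun k =>
    Finset.eq_or_swap_eq_of_filter_le_eq_singleton hAB.symm
      (Finset.mem_union_left _ (Finset.mem_image_of_mem _ (Finset.mem_univ k)))
      (Finset.mem_union_right _
        (Finset.mem_image.mpr ⟨k.rev, Finset.mem_univ _, by rw [Fin.rev_rev]⟩))
  have hmem : ∀ k, a k ∈ ({i, j} : Finset ℕ) ∧ b k.rev ∈ ({i, j} : Finset ℕ) := by
    intro k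
    rcases hpair k with h | h <;> simp only [Prod.mk.injEq] at h <;> simp [h.1, h.2]
  have hsub_a : Finset.univ.image a ⊆ {i, j} :=
    Finset.image_subset_iff.mpr fun k _ => (hmem k).1
  have hsub_b : Finset.univ.image b ⊆ {i, j} :=
    Finset.image_subset_iff.mpr fun k _ => by simpa using (hmem k.rev).2
  have hr : r + 1 ≤ 2 := by
    simpa using (Fintype.card_le_of_image_univ_subset ha.injective hsub_a).trans Finset.card_le_two
  obtain rfl | rfl : r = 0 ∨ r = 1 := by omega
  · have hrev : (0 : Fin 1).rev = 0 := rfl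
    right
    rcases hpair 0 with h | h <;> simp only [Prod.mk.injEq, hrev] at h <;> simp [h.1, h.2]
  · have hcard : ({i, j} : Finset ℕ).card ≤ Fintype.card (Fin 2) := by
      simpa using Finset.card_le_two
    exact Or.inl ⟨Finset.image_univ_eq_of_subset_of_card_le ha.injective hsub_a hcard,
      Finset.image_univ_eq_of_subset_of_card_le hb.injective hsub_b hcard⟩

/-- Let `A = {a₀ < … < a_r}` and `B = {b₀ < … < b_r}` be sets of positive
integers, `A⊙B = {(aᵢ, b_{r-i})}`, and
`A⊞B = {(i,j) ∈ A⊙B : i ≥ j} ∪ {(i,j) ∈ B⊙A : i ≥ j}`, with all pairs in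
`A⊞B` having distinct coordinates. If `∏_{(i,j) ∈ A⊞B} u_{ij}` equals the
single variable `u_{ij}` for some `n ≥ i > j ≥ 1`, then `A = B = {i,j}` or
`{A, B} = {{i}, {j}}`. -/
theorem uss_eq_single_variable {K : Type*} [Field K] {r : ℕ}
    (a b : Fin (r + 1) → ℕ) (ha : StrictMono a) (hb : StrictMono b)
    (hapos : ∀ k, 0 < a k) (hbpos : ∀ k, 0 < b k)
    (n i j : ℕ) (hji : j < i) (hj : 1 ≤ j) (hin : i ≤ n)
    (AB : Finset (ℕ × ℕ))
    (hAB : AB =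
      ((Finset.univ.image fun k : Fin (r + 1) => (a k, b k.rev)) ∪
        (Finset.univ.image fun k : Fin (r + 1) => (b k, a k.rev))).filter
        (fun p => p.2 ≤ p.1))
    (hne : ∀ p ∈ AB, p.1 ≠ p.2)
    (heq : (∏ p ∈ AB, (X p : MvPolynomial (ℕ × ℕ) K)) = X (i, j)) :
    (Finset.univ.image a = ({i, j} : Finset ℕ) ∧
        Finset.univ.image b = ({i, j} : Finset ℕ)) ∨
    (Finset.univ.image a = ({i} : Finset ℕ) ∧ Finset.univ.image b = ({j} : Finset ℕ)) ∨
    (Finset.univ.image a = ({j} : Finset ℕ) ∧ Finset.univ.image b = ({i} : Finset ℕ)) :=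
  uss_eq_single_variable_general a b ha hb i j AB hAB heq
end
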